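/- arXiv:2307.03554 — 4 statements merged into one kernel-verified Lean document; each statement's English description precedes it below -/
import Mathlib

section
/- For any integer N ≥ 2, the number of quadruples (n₁, n₂, m₁, m₂) of integers with N < n₁, n₂, m₁, m₂ ≤ 2N satisfying |n₁² + n₂² − m₁² − m₂²| ≤ N and |n₁⁴ + n₂⁴ − m₁⁴ − m₂⁴| ≤ N³ is O(N² log N). -/
/-!
Put `A = n₁² + n₂² - m₁² - m₂²` and `B = n₁⁴ + n₂⁴ - m₁⁴ - m₂⁴`. Eliminating `n₂` gives
`2 (n₁² - m₁²)(n₁² - m₂²) = A² - 2 A n₂² + B = O(N³)`, and since `(n₁ + m₁)(n₁ + m₂) > 4N²` this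
forces `|(n₁ - m₁)(n₁ - m₂)| ≤ 2N`. Given `n₁, m₁, m₂`, the bound `|A| ≤ N` determines `n₂`, because
distinct squares of integers in `(N, 2N]` differ by more than `2N`. Hence the count is at most `N`
times the number of lattice points `(d₁, d₂) ∈ [-N, N]²` with `|d₁ d₂| ≤ 2N`, which is
`O(N log N)` by the harmonic sum.
-/

open Finset Real

lemma eq_of_abs_sq_sub_sq_le {N a b : ℤ} (ha : N < a) (hb : N < b)
    (h : |a ^ 2 - b ^ 2| ≤ 2 * N) : a = b := by
  rw [abs_le] at h
  rcases lt_trichotomy a b with hab | hab | hab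
  · nlinarith
  · exact hab
  · nlinarith

lemma abs_sub_mul_sub_le {N n₁ n₂ m₁ m₂ : ℤ} (hN : 1 ≤ N) (hn₁ : N < n₁) (hn₂ : |n₂| ≤ 2 * N)
    (hm₁ : N < m₁) (hm₂ : N < m₂)
    (h₂ : |n₁ ^ 2 + n₂ ^ 2 - m₁ ^ 2 - m₂ ^ 2| ≤ N)
    (h₄ : |n₁ ^ 4 + n₂ ^ 4 - m₁ ^ 4 - m₂ ^ 4| ≤ N ^ 3) :
    |(n₁ - m₁) * (n₁ - m₂)| ≤ 2 * N := by
  set A := n₁ ^ 2 + n₂ ^ 2 - m₁ ^ 2 - m₂ ^ 2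
  set B := n₁ ^ 4 + n₂ ^ 4 - m₁ ^ 4 - m₂ ^ 4
  have hid : (n₁ - m₁) * (n₁ - m₂) * (2 * ((n₁ + m₁) * (n₁ + m₂)))
      = A ^ 2 - 2 * A * n₂ ^ 2 + B := by
    ring
  have hn₂sq : n₂ ^ 2 ≤ 4 * N ^ 2 := by nlinarith [sq_abs n₂, abs_nonneg n₂]
  have hrhs : |A ^ 2 - 2 * A * n₂ ^ 2 + B| ≤ 10 * N ^ 3 := by
    calc |A ^ 2 - 2 * A * n₂ ^ 2 + B| ≤ |A| ^ 2 + 2 * |A| * n₂ ^ 2 + |B| := by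
          refine (abs_add_le _ _).trans (add_le_add ((abs_sub _ _).trans ?_) le_rfl)
          simp [abs_mul, abs_pow]
      _ ≤ N ^ 2 + 2 * N * (4 * N ^ 2) + N ^ 3 := by gcongr
      _ ≤ 10 * N ^ 3 := by nlinarith
  have hQ : 8 * N ^ 2 ≤ 2 * ((n₁ + m₁) * (n₁ + m₂)) := by nlinarith
  have hmul : |(n₁ - m₁) * (n₁ - m₂)| * (8 * N ^ 2) ≤ 2 * N * (8 * N ^ 2) := by
    calc |(n₁ - m₁) * (n₁ - m₂)| * (8 * N ^ 2)
        ≤ |(n₁ - m₁) * (n₁ - m₂)| * (2 * ((n₁ + m₁) * (n₁ + m₂))) := by gcongr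
      _ = |A ^ 2 - 2 * A * n₂ ^ 2 + B| := by
          rw [← hid, abs_mul ((n₁ - m₁) * (n₁ - m₂)), abs_of_nonneg (hQ.trans' (by positivity))]
      _ ≤ 2 * N * (8 * N ^ 2) := by nlinarith
  exact le_of_mul_le_mul_right hmul (by positivity)

lemma card_filter_abs_mul_le (s : Finset ℤ) {a b : ℤ} (ha : 0 < a) (hb : 0 ≤ b) :
    (#{x ∈ s | |x| * a ≤ b} : ℝ) ≤ 2 * b / a + 1 := by
  have hsub : {x ∈ s | |x| * a ≤ b} ⊆ Icc (-(b / a)) (b / a) := fun x hx => by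
    rw [mem_filter] at hx
    rw [mem_Icc, ← abs_le]
    exact (Int.le_ediv_iff_mul_le ha).mpr hx.2
  have hquot : ((b / a : ℤ) : ℝ) ≤ b / a := by
    rw [le_div_iff₀ (by exact_mod_cast ha)]
    exact_mod_cast Int.ediv_mul_le b ha.ne'
  have hcard : (#(Icc (-(b / a)) (b / a)) : ℝ) = 2 * (b / a : ℤ) + 1 := by
    rw [← Int.cast_natCast, Int.card_Icc_of_le _ _ (by linarith [Int.ediv_nonneg hb ha.le])]
    push_cast; ring
  calc (#{x ∈ s | |x| * a ≤ b} : ℝ) ≤ #(Icc (-(b / a)) (b / a)) := by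
        exact_mod_cast card_le_card hsub
    _ ≤ 2 * b / a + 1 := by rw [hcard, mul_div_assoc]; linarith

lemma sum_Icc_natAbs_le {f : ℕ → ℝ} (hf : ∀ k, 0 ≤ f k) (N : ℕ) :
    ∑ d ∈ Icc (-(N : ℤ)) N, f d.natAbs ≤ 2 * ∑ k ∈ range (N + 1), f k := by
  have hsub : Icc (-(N : ℤ)) N
      ⊆ (range (N + 1) ×ˢ {1, -1}).image fun p : ℕ × ℤ => p.2 * (p.1 : ℤ) := by
    intro d hd
    rw [mem_Icc] at hd
    simp only [mem_image, mem_product, mem_range, mem_insert, mem_singleton, Prod.exists]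
    rcases le_total 0 d with h | h
    · exact ⟨d.natAbs, 1, ⟨by omega, by simp⟩, by omega⟩
    · exact ⟨d.natAbs, -1, ⟨by omega, by simp⟩, by omega⟩
  calc ∑ d ∈ Icc (-(N : ℤ)) N, f d.natAbs
      ≤ ∑ d ∈ (range (N + 1) ×ˢ {1, -1}).image (fun p : ℕ × ℤ => p.2 * (p.1 : ℤ)), f d.natAbs :=
        sum_le_sum_of_subset_of_nonneg hsub fun _ _ _ => hf _
    _ ≤ ∑ p ∈ range (N + 1) ×ˢ ({1, -1} : Finset ℤ), f (p.2 * p.1).natAbs :=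
        sum_image_le_of_nonneg fun _ _ => hf _
    _ = 2 * ∑ k ∈ range (N + 1), f k := by
        rw [sum_product, mul_sum]
        refine sum_congr rfl fun k _ => ?_
        rw [sum_pair (by decide)]
        simp only [one_mul, neg_one_mul, Int.natAbs_neg, Int.natAbs_natCast]
        ring

lemma sum_Icc_inv_natAbs_add_one_le (N : ℕ) :
    ∑ d ∈ Icc (-(N : ℤ)) N, 1 / ((d.natAbs : ℝ) + 1) ≤ 2 * (1 + log (N + 1)) := by
  have hharm : ∑ k ∈ range (N + 1), 1 / ((k : ℝ) + 1) = harmonic (N + 1) := by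
    simp [harmonic, one_div]
  calc ∑ d ∈ Icc (-(N : ℤ)) N, 1 / ((d.natAbs : ℝ) + 1)
      ≤ 2 * ∑ k ∈ range (N + 1), 1 / ((k : ℝ) + 1) :=
        sum_Icc_natAbs_le (f := fun k => 1 / ((k : ℝ) + 1)) (fun _ => by positivity) N
    _ ≤ 2 * (1 + log (N + 1)) := by
        rw [hharm]
        exact_mod_cast mul_le_mul_of_nonneg_left (harmonic_le_one_add_log (N + 1)) two_pos.le

noncomputable def hyperbolaBox (N : ℕ) (M : ℤ) : Finset (ℤ × ℤ) :=
  {d ∈ Icc (-(N : ℤ)) N ×ˢ Icc (-(N : ℤ)) N | |d.1 * d.2| ≤ M}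

lemma card_hyperbolaBox_le (N : ℕ) {M : ℤ} (hM : 0 ≤ M) :
    (#(hyperbolaBox N M) : ℝ) ≤ 4 * (M + N) * (1 + log (N + 1)) + (2 * N + 1) := by
  have hfiber (d₁ : ℤ) : (#{d₂ ∈ Icc (-(N : ℤ)) N | |d₁ * d₂| ≤ M} : ℝ)
      ≤ 2 * (M + N) * (1 / ((d₁.natAbs : ℝ) + 1)) + 1 := by
    -- on the box, `|d₁ d₂| ≤ M` forces `|d₂| (|d₁| + 1) ≤ M + N`, which also covers `d₁ = 0`
    have hsub : {d₂ ∈ Icc (-(N : ℤ)) N | |d₁ * d₂| ≤ M}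
        ⊆ {d₂ ∈ Icc (-(N : ℤ)) N | |d₂| * (d₁.natAbs + 1) ≤ M + N} := by
      refine monotone_filter_right _ fun d₂ hd₂ h => ?_
      rw [mem_Icc, ← abs_le] at hd₂
      rw [Int.natCast_natAbs, mul_add_one, mul_comm, ← abs_mul]
      omega
    calc (#{d₂ ∈ Icc (-(N : ℤ)) N | |d₁ * d₂| ≤ M} : ℝ)
        ≤ #{d₂ ∈ Icc (-(N : ℤ)) N | |d₂| * (d₁.natAbs + 1) ≤ M + N} := by
          exact_mod_cast card_le_card hsub
      _ ≤ 2 * ((M + N : ℤ) : ℝ) / ((d₁.natAbs + 1 : ℤ) : ℝ) + 1 :=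
          card_filter_abs_mul_le _ (by positivity) (by positivity)
      _ = 2 * (M + N) * (1 / ((d₁.natAbs : ℝ) + 1)) + 1 := by
          rw [Nat.cast_natAbs (α := ℝ), Int.cast_abs]; push_cast; ring
  have hcard : (#(Icc (-(N : ℤ)) N) : ℝ) = 2 * N + 1 := by
    rw [Int.card_Icc, ← Int.cast_natCast, Int.toNat_of_nonneg (by omega)]
    push_cast; ring
  calc (#(hyperbolaBox N M) : ℝ)
      = ∑ d₁ ∈ Icc (-(N : ℤ)) N, (#{d₂ ∈ Icc (-(N : ℤ)) N | |d₁ * d₂| ≤ M} : ℝ) := by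
        simp only [hyperbolaBox, card_filter, sum_product, Nat.cast_sum]
    _ ≤ ∑ d₁ ∈ Icc (-(N : ℤ)) N, (2 * (M + N) * (1 / ((d₁.natAbs : ℝ) + 1)) + 1) :=
        sum_le_sum fun d₁ _ => hfiber d₁
    _ = 2 * (M + N) * ∑ d₁ ∈ Icc (-(N : ℤ)) N, 1 / ((d₁.natAbs : ℝ) + 1) + (2 * N + 1) := by
        rw [sum_add_distrib, ← mul_sum, sum_const, nsmul_one, hcard]
    _ ≤ 2 * (M + N) * (2 * (1 + log (N + 1))) + (2 * N + 1) := by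
        have hMN : (0 : ℝ) ≤ 2 * (M + N) := by positivity
        gcongr
        exact sum_Icc_inv_natAbs_add_one_le N
    _ = 4 * (M + N) * (1 + log (N + 1)) + (2 * N + 1) := by ring

noncomputable def solutionSet (N : ℤ) : Finset ((ℤ × ℤ) × (ℤ × ℤ)) :=
  (((Finset.Ioc N (2*N)) ×ˢ (Finset.Ioc N (2*N))) ×ˢ
      ((Finset.Ioc N (2*N)) ×ˢ (Finset.Ioc N (2*N)))).filter
    (fun x =>
      |x.1.1^2 + x.1.2^2 - x.2.1^2 - x.2.2^2| ≤ N ∧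
      |x.1.1^4 + x.1.2^4 - x.2.1^4 - x.2.2^4| ≤ N^3)

lemma mem_solutionSet {N n₁ n₂ m₁ m₂ : ℤ} :
    ((n₁, n₂), (m₁, m₂)) ∈ solutionSet N ↔
      (n₁ ∈ Ioc N (2 * N) ∧ n₂ ∈ Ioc N (2 * N) ∧ m₁ ∈ Ioc N (2 * N) ∧ m₂ ∈ Ioc N (2 * N)) ∧
      |n₁ ^ 2 + n₂ ^ 2 - m₁ ^ 2 - m₂ ^ 2| ≤ N ∧ |n₁ ^ 4 + n₂ ^ 4 - m₁ ^ 4 - m₂ ^ 4| ≤ N ^ 3 := by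
  simp [solutionSet, and_assoc]

lemma sub_mem_hyperbolaBox {N : ℕ} {n₁ n₂ m₁ m₂ : ℤ}
    (h : ((n₁, n₂), (m₁, m₂)) ∈ solutionSet N) :
    (n₁ - m₁, n₁ - m₂) ∈ hyperbolaBox N (2 * N) := by
  obtain ⟨⟨hn₁, hn₂, hm₁, hm₂⟩, h₂, h₄⟩ := mem_solutionSet.mp h
  rw [mem_Ioc] at hn₁ hn₂ hm₁ hm₂
  simp only [hyperbolaBox, mem_filter, mem_product, mem_Icc]
  refine ⟨⟨⟨by omega, by omega⟩, by omega, by omega⟩, ?_⟩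
  exact abs_sub_mul_sub_le (by omega) hn₁.1 (abs_le.mpr ⟨by omega, hn₂.2⟩) hm₁.1 hm₂.1 h₂ h₄

lemma eq_of_mem_solutionSet {N n₁ n₂ n₂' m₁ m₂ : ℤ}
    (h : ((n₁, n₂), (m₁, m₂)) ∈ solutionSet N) (h' : ((n₁, n₂'), (m₁, m₂)) ∈ solutionSet N) :
    n₂ = n₂' := by
  obtain ⟨⟨-, hn₂, -⟩, h₂, -⟩ := mem_solutionSet.mp h
  obtain ⟨⟨-, hn₂', -⟩, h₂', -⟩ := mem_solutionSet.mp h'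
  refine eq_of_abs_sq_sub_sq_le (mem_Ioc.mp hn₂).1 (mem_Ioc.mp hn₂').1 ?_
  calc |n₂ ^ 2 - n₂' ^ 2|
      = |(n₁ ^ 2 + n₂ ^ 2 - m₁ ^ 2 - m₂ ^ 2) - (n₁ ^ 2 + n₂' ^ 2 - m₁ ^ 2 - m₂ ^ 2)| := by
        ring_nf
    _ ≤ 2 * N := (abs_sub _ _).trans (by linarith)

lemma card_solutionSet_le (N : ℕ) : #(solutionSet N) ≤ N * #(hyperbolaBox N (2 * N)) := by
  calc #(solutionSet N)
      ≤ #(Ioc (N : ℤ) (2 * N) ×ˢ hyperbolaBox N (2 * N)) := by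
        refine card_le_card_of_injOn (fun x => (x.1.1, x.1.1 - x.2.1, x.1.1 - x.2.2)) ?_ ?_
        · rintro ⟨⟨n₁, n₂⟩, m₁, m₂⟩ hx
          exact mem_product.mpr ⟨(mem_solutionSet.mp hx).1.1, sub_mem_hyperbolaBox hx⟩
        · rintro ⟨⟨n₁, n₂⟩, m₁, m₂⟩ hx ⟨⟨n₁', n₂'⟩, m₁', m₂'⟩ hy hxy
          simp only [Prod.mk.injEq] at hxy
          obtain ⟨rfl, h₁, h₂⟩ := hxy
          obtain rfl : m₁ = m₁' := by omega
          obtain rfl : m₂ = m₂' := by omega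
          rw [eq_of_mem_solutionSet hx hy]
    _ = N * #(hyperbolaBox N (2 * N)) := by
        rw [card_product, Int.card_Ioc]
        congr
        omega

lemma mul_hyperbola_bound_le {x : ℝ} (hx : 2 ≤ x) :
    x * (4 * (2 * x + x) * (1 + log (x + 1)) + (2 * x + 1)) ≤ 60 * x ^ 2 * log x := by
  have hhalf : 1 / 2 ≤ log x :=
    calc 1 / 2 ≤ log 2 := by linarith [log_two_gt_d9]
      _ ≤ log x := log_le_log two_pos hx
  have hsucc : log (x + 1) ≤ 2 * log x := by
    calc log (x + 1) ≤ log (x ^ 2) := log_le_log (by linarith) (by nlinarith)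
      _ = 2 * log x := by rw [log_pow]; norm_num
  nlinarith [mul_le_mul_of_nonneg_left hsucc (by positivity : (0 : ℝ) ≤ x ^ 2),
    mul_le_mul_of_nonneg_left hhalf (by positivity : (0 : ℝ) ≤ x ^ 2)]

theorem stmt_0 :
    ∃ C : ℝ, 0 < C ∧ ∀ N : ℤ, 2 ≤ N →
      (((((Finset.Ioc N (2*N)) ×ˢ (Finset.Ioc N (2*N))) ×ˢ
          ((Finset.Ioc N (2*N)) ×ˢ (Finset.Ioc N (2*N)))).filter
        (fun x =>
          |x.1.1^2 + x.1.2^2 - x.2.1^2 - x.2.2^2| ≤ N ∧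
          |x.1.1^4 + x.1.2^4 - x.2.1^4 - x.2.2^4| ≤ N^3)).card : ℝ)
        ≤ C * (N : ℝ)^2 * Real.log N := by
  refine ⟨60, by norm_num, fun N hN => ?_⟩
  lift N to ℕ using (by omega)
  have hN' : (2 : ℝ) ≤ N := by exact_mod_cast hN
  have hbox := card_hyperbolaBox_le N (M := 2 * N) (by positivity)
  push_cast at hbox ⊢
  calc (#(solutionSet N) : ℝ) ≤ N * #(hyperbolaBox N (2 * N)) := by
        exact_mod_cast card_solutionSet_le N
    _ ≤ N * (4 * (2 * N + N) * (1 + log (N + 1)) + (2 * N + 1)) := by gcongr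
    _ ≤ 60 * N ^ 2 * log N := mul_hyperbola_bound_le hN'
end

section
/- For any integer N ≥ 2 and any real U with 1 ≤ U ≤ N, the number of pairs of integers (c, d) with U ≤ c ≤ 2U, |d| ≤ N, and |c² − d²| ≤ N is O(N). -/
/-!
Since `c² - d² = (c - |d|)(c + |d|)` and `c + |d| ≥ c ≥ U`, the bound `|c² - d²| ≤ N` forces
`|c - |d|| ≤ N / U`. So a pair `(c, d)` is determined by one of the `O(U)` values of `c`, one of the
`O(N / U)` values of `|d| - c` and the sign of `d`, giving `O(N)` pairs in total.
-/

open Finset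

lemma Int.card_Icc_ceil_floor_le {K : Type*} [Field K] [LinearOrder K] [IsStrictOrderedRing K]
    [FloorRing K] {a b : K} (hab : a ≤ b) : (#(Icc ⌈a⌉ ⌊b⌋) : K) ≤ b - a + 1 := by
  have hcard : (#(Icc ⌈a⌉ ⌊b⌋) : ℤ) = ⌊b⌋ + 1 - ⌈a⌉ :=
    Int.card_Icc_of_le _ _ ((Int.ceil_le_floor_add_one a).trans (by gcongr))
  rw [← Int.cast_natCast, hcard]
  push_cast
  linarith [Int.floor_le b, Int.le_ceil a]

lemma abs_sub_abs_le_div_of_abs_sq_sub_sq_le {K : Type*} [Field K] [LinearOrder K]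
    [IsStrictOrderedRing K] {c d U N : K} (hU : 0 < U) (hUc : U ≤ c) (h : |c ^ 2 - d ^ 2| ≤ N) :
    |c - (|d|)| ≤ N / U := by
  have hsum : U ≤ c + |d| := le_add_of_le_of_nonneg hUc (abs_nonneg d)
  rw [le_div_iff₀ hU]
  calc |c - (|d|)| * U ≤ |c - (|d|)| * (c + |d|) := by gcongr
    _ = |c ^ 2 - d ^ 2| := by
      rw [← sq_abs d, sq_sub_sq, abs_mul, abs_of_pos (hU.trans_le hsum), mul_comm]
    _ ≤ N := h

-- `(c, d)` is recovered from `c`, `e = |d| - c` and the sign of `d` as `d = ±(c + e)`.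
lemma card_le_of_forall_abs_sub_mem {S : Finset (ℤ × ℤ)} {A E : Finset ℤ}
    (h : ∀ x ∈ S, x.1 ∈ A ∧ |x.2| - x.1 ∈ E) : #S ≤ 2 * (#A * #E) := by
  calc #S ≤ #(((A ×ˢ E) ×ˢ ({1, -1} : Finset ℤ)).image
        fun y => (y.1.1, y.2 * (y.1.1 + y.1.2))) := by
        refine card_le_card fun x hx => mem_image.2 ?_
        obtain ⟨hA, hE⟩ := h x hx
        rcases abs_choice x.2 with hd | hd
        · exact ⟨((x.1, |x.2| - x.1), 1), by simp [hA, hE], by simp [hd]⟩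
        · exact ⟨((x.1, |x.2| - x.1), -1), by simp [hA, hE], by simp [hd]⟩
    _ ≤ 2 * (#A * #E) := by
        grw [card_image_le]
        simp [card_product, mul_comm]

theorem stmt_2 :
    ∃ C : ℝ, 0 < C ∧ ∀ N : ℤ, 2 ≤ N → ∀ U : ℝ, 1 ≤ U → U ≤ N →
      ((((Finset.Icc (1:ℤ) (2*N)) ×ˢ (Finset.Icc (-N) N)).filter
        (fun x => U ≤ (x.1 : ℝ) ∧ (x.1 : ℝ) ≤ 2*U ∧ |x.1^2 - x.2^2| ≤ N)).card : ℝ)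
        ≤ C * N := by
  refine ⟨12, by norm_num, fun N _ U hU hUN => ?_⟩
  have hU0 : (0 : ℝ) < U := one_pos.trans_le hU
  have hNU : 1 ≤ (N : ℝ) / U := (one_le_div hU0).2 hUN
  have hA := Int.card_Icc_ceil_floor_le (show U ≤ 2 * U by linarith)
  have hE := Int.card_Icc_ceil_floor_le (show -(N / U) ≤ (N : ℝ) / U by linarith)
  refine (Nat.cast_le.2 (card_le_of_forall_abs_sub_mem
    (A := Icc ⌈U⌉ ⌊2 * U⌋) (E := Icc ⌈-(N / U)⌉ ⌊(N : ℝ) / U⌋) fun x hx => ?_)).trans ?_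
  · obtain ⟨-, hc₁, hc₂, hcd⟩ := mem_filter.1 hx
    have hcd' : |(x.1 : ℝ) ^ 2 - (x.2 : ℝ) ^ 2| ≤ N := by exact_mod_cast hcd
    have hdist := abs_sub_abs_le_div_of_abs_sq_sub_sq_le hU0 hc₁ hcd'
    rw [abs_sub_comm] at hdist
    refine ⟨Int.cast_mem_Icc_iff.1 ⟨hc₁, hc₂⟩, Int.cast_mem_Icc_iff.1 ?_⟩
    exact_mod_cast abs_le.1 hdist
  · push_cast
    calc 2 * ((#(Icc ⌈U⌉ ⌊2 * U⌋) : ℝ) * #(Icc ⌈-(N / U)⌉ ⌊(N : ℝ) / U⌋))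
        ≤ 2 * ((2 * U) * (3 * (N / U))) := by gcongr <;> linarith
      _ = 12 * N := by field_simp; ring
end

section
/- Let 0 < α ≤ 1/2 and |γ| ≤ α/(96 N²), and set g(x) = αx² + γx⁴ on [N, 2N]. Let z(y) be the inverse function of g′ and g*(y) = g(z(y)) − y·z(y). Then g*(y) = −y²/(4α) + γy⁴/(16α⁴) − γ²y⁶/(16α⁷) + v(y), where v satisfies |v(y)| ≪ |γ|³N⁸/α² and |v′(y)| ≪ |γ|³N⁷/α³ on the domain of g*. -/
/-!
With `y = g'(x) = 2αx + 4γx³` and `w = γx²/α`, the difference between `g(x) - y x` and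
`-y²/(4α) + γy⁴/(16α⁴) - γ²y⁶/(16α⁷)` is, as a polynomial identity in `x`, exactly
`R(x) = (4γ³x⁸/α²) P(w)` for an explicit quintic `P`; so `v = R ∘ z`. The bound on `γ` gives
`|w| ≤ 1/24` for `|x| ≤ 2N`, hence `|R| ≪ |γ|³N⁸/α²`, and `g'' = 2α(1 + 6w) ≥ 3α/2`, hence
`|v'| = |R'/g''| ≪ |γ|³N⁷/α³`.

Since `v'` is needed at the endpoints of the domain of `z`, `z` is replaced by the inverse of an
order isomorphism of `ℝ` which agrees with `g'` on `[0, 5N/2]`, where `g'' ≥ α`.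
-/

open Set Filter Topology

/-- Continue `f` affinely with slope `m` outside `[a, b]`. -/
theorem exists_orderIso_eqOn_Icc {f : ℝ → ℝ} {a b m : ℝ} (hab : a ≤ b) (hm : 0 < m)
    (hf : ContinuousOn f (Icc a b)) (hmono : MonotoneOn (fun x => f x - m * x) (Icc a b)) :
    ∃ e : ℝ ≃o ℝ, EqOn e f (Icc a b) := by
  set g : Icc a b → ℝ := fun x => f x - m * x
  have hg : Monotone g := fun x y hxy => hmono x.2 y.2 hxy
  have hg_le (x : Icc a b) : g ⟨a, left_mem_Icc.2 hab⟩ ≤ g x := hg x.2.1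
  have hg_ge (x : Icc a b) : g x ≤ g ⟨b, right_mem_Icc.2 hab⟩ := hg x.2.2
  set G : ℝ → ℝ := fun t => IccExtend hab g t + m * t
  have hG_mono : StrictMono G :=
    (hg.IccExtend hab).add_strictMono (strictMono_mul_left_of_pos hm)
  have hG_cont : Continuous G :=
    (continuous_IccExtend_iff.2 (hf.sub (continuousOn_const.mul continuousOn_id)).domRestrict).add
      (continuous_const.mul continuous_id)
  have hG_top : Tendsto G atTop atTop :=
    tendsto_atTop_add_left_of_le _ _ (fun _ => hg_le _) (tendsto_id.const_mul_atTop hm)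
  have hG_bot : Tendsto G atBot atBot :=
    tendsto_atBot_add_left_of_ge _ _ (fun _ => hg_ge _) (tendsto_id.const_mul_atBot hm)
  refine ⟨hG_mono.orderIsoOfSurjective G (hG_cont.surjective hG_top hG_bot), fun x hx => ?_⟩
  simp [G, g, IccExtend_of_mem hab g hx]

theorem OrderIso.hasDerivAt_symm_of_eventuallyEq {e : ℝ ≃o ℝ} {f : ℝ → ℝ} {f' x : ℝ}
    (hef : e =ᶠ[𝓝 x] f) (hf : HasDerivAt f f' x) (hf' : f' ≠ 0) :
    HasDerivAt e.symm f'⁻¹ (e x) :=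
  HasDerivAt.of_local_left_inverse e.symm.continuous.continuousAt
    (by rwa [e.symm_apply_apply, hef.hasDerivAt_iff]) hf'
    (Eventually.of_forall e.apply_symm_apply)

def quartic (α γ x : ℝ) : ℝ := α * x^2 + γ * x^4

def quarticDeriv (α γ x : ℝ) : ℝ := 2*α*x + 4*γ*x^3

def remainderPoly (w : ℝ) : ℝ := 6 + 52*w + 156*w^2 + 240*w^3 + 192*w^4 + 64*w^5

/-- `x⁷ * remainderDerivPoly (γ/α*x²)` is the derivative of `x⁸ * remainderPoly (γ/α*x²)`;
as a polynomial in `w` it is `8 P(w) + 2 w P'(w)` with `P = remainderPoly`. -/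
def remainderDerivPoly (w : ℝ) : ℝ := 48 + 520*w + 1872*w^2 + 3360*w^3 + 3072*w^4 + 1152*w^5

noncomputable def legendreRemainder (α γ x : ℝ) : ℝ :=
  4*γ^3/α^2 * x^8 * remainderPoly (γ/α*x^2)

theorem quartic_sub_mul_eq {α γ x y : ℝ} (hα : α ≠ 0) (hy : quarticDeriv α γ x = y) :
    quartic α γ x - y * x
      = -y^2/(4*α) + γ*y^4/(16*α^4) - γ^2*y^6/(16*α^7) + legendreRemainder α γ x := by
  subst hy
  unfold quartic quarticDeriv legendreRemainder remainderPoly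
  field_simp
  ring

theorem hasDerivAt_quarticDeriv (α γ x : ℝ) :
    HasDerivAt (quarticDeriv α γ) (2*α + 12*γ*x^2) x := by
  have hd : DifferentiableAt ℝ (quarticDeriv α γ) x := by unfold quarticDeriv; fun_prop
  refine hd.hasDerivAt.congr_deriv ?_
  unfold quarticDeriv
  simp (disch := fun_prop)
  ring

theorem hasDerivAt_legendreRemainder (α γ x : ℝ) :
    HasDerivAt (legendreRemainder α γ) (4*γ^3/α^2 * x^7 * remainderDerivPoly (γ/α*x^2)) x := by
  have hd : DifferentiableAt ℝ (legendreRemainder α γ) x := by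
    unfold legendreRemainder remainderPoly; fun_prop
  refine hd.hasDerivAt.congr_deriv ?_
  unfold legendreRemainder remainderPoly remainderDerivPoly
  simp (disch := fun_prop)
  ring

theorem abs_remainderPoly_le {w : ℝ} (hw : |w| ≤ 1/24) : |remainderPoly w| ≤ 9 := by
  have h (k : ℕ) : |w^k| ≤ (1/24)^k := abs_pow w k ▸ pow_le_pow_left₀ (abs_nonneg w) hw k
  have := abs_le.1 hw; have := abs_le.1 (h 2); have := abs_le.1 (h 3)
  have := abs_le.1 (h 4); have := abs_le.1 (h 5)
  rw [remainderPoly, abs_le]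
  constructor <;> linarith

theorem abs_remainderDerivPoly_le {w : ℝ} (hw : |w| ≤ 1/24) : |remainderDerivPoly w| ≤ 74 := by
  have h (k : ℕ) : |w^k| ≤ (1/24)^k := abs_pow w k ▸ pow_le_pow_left₀ (abs_nonneg w) hw k
  have := abs_le.1 hw; have := abs_le.1 (h 2); have := abs_le.1 (h 3)
  have := abs_le.1 (h 4); have := abs_le.1 (h 5)
  rw [remainderDerivPoly, abs_le]
  constructor <;> linarith

section Bounds

variable {α γ N x : ℝ} (hα : 0 < α) (hN : 0 < N) (hγ : |γ| ≤ α / (96 * N^2))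
include hα hN hγ

theorem abs_div_mul_sq_le {c : ℝ} (hx : |x| ≤ c * N) : |γ/α*x^2| ≤ c^2/96 := by
  have hx2 : x^2 ≤ (c*N)^2 := sq_abs x ▸ pow_le_pow_left₀ (abs_nonneg x) hx 2
  rw [abs_mul, abs_div, abs_of_pos hα, abs_of_nonneg (sq_nonneg x)]
  calc |γ| / α * x^2 ≤ α / (96 * N^2) / α * (c*N)^2 := by gcongr
    _ = c^2/96 := by field_simp

theorem le_quarticDeriv_deriv {c : ℝ} (hx : |x| ≤ c * N) :
    α * (2 - c^2/8) ≤ 2*α + 12*γ*x^2 := by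
  have hw := (abs_le.1 (abs_div_mul_sq_le hα hN hγ hx)).1
  have : 12*γ*x^2 = 12*α*(γ/α*x^2) := by field_simp
  nlinarith

theorem monotoneOn_quarticDeriv_sub_mul :
    MonotoneOn (fun x => quarticDeriv α γ x - α * x) (Icc 0 (5/2 * N)) := by
  refine monotoneOn_of_hasDerivWithinAt_nonneg (convex_Icc _ _)
    (by unfold quarticDeriv; fun_prop) (f' := fun x => 2*α + 12*γ*x^2 - α * 1)
    (fun x _ => ((hasDerivAt_quarticDeriv α γ x).sub
      ((hasDerivAt_id x).const_mul α)).hasDerivWithinAt) fun x hx => ?_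
  rw [interior_Icc] at hx
  have := le_quarticDeriv_deriv hα hN hγ (abs_le.2 ⟨by linarith [hx.1], hx.2.le⟩)
  linarith

theorem abs_legendreRemainder_le (hx : |x| ≤ 2 * N) :
    |legendreRemainder α γ x| ≤ 9216 * |γ|^3 * N^8 / α^2 := by
  have hP := abs_remainderPoly_le ((abs_div_mul_sq_le hα hN hγ hx).trans_eq (by norm_num))
  calc |legendreRemainder α γ x| = 4*|γ|^3/α^2 * |x|^8 * |remainderPoly (γ/α*x^2)| := by
        simp [legendreRemainder, abs_mul, abs_div, abs_of_pos hα]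
    _ ≤ 4*|γ|^3/α^2 * (2*N)^8 * 9 := by gcongr
    _ = 9216 * |γ|^3 * N^8 / α^2 := by ring

theorem abs_legendreRemainder_deriv_div_le (hx : |x| ≤ 2 * N) :
    |4*γ^3/α^2 * x^7 * remainderDerivPoly (γ/α*x^2) * (2*α + 12*γ*x^2)⁻¹|
      ≤ 25259 * |γ|^3 * N^7 / α^3 := by
  have hQ := abs_remainderDerivPoly_le ((abs_div_mul_sq_le hα hN hγ hx).trans_eq (by norm_num))
  have hD : 3/2 * α ≤ 2*α + 12*γ*x^2 := by
    linarith [le_quarticDeriv_deriv hα hN hγ hx]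
  have hD_pos : 0 < 2*α + 12*γ*x^2 := by linarith
  calc |4*γ^3/α^2 * x^7 * remainderDerivPoly (γ/α*x^2) * (2*α + 12*γ*x^2)⁻¹|
        = 4*|γ|^3/α^2 * |x|^7 * |remainderDerivPoly (γ/α*x^2)| * (2*α + 12*γ*x^2)⁻¹ := by
        simp [abs_mul, abs_div, abs_of_pos hα, abs_of_pos hD_pos]
    _ ≤ 4*|γ|^3/α^2 * (2*N)^7 * 74 * (3/2 * α)⁻¹ := by gcongr
    _ = 75776/3 * |γ|^3 * N^7 / α^3 := by field_simp; ring
    _ ≤ 25259 * |γ|^3 * N^7 / α^3 := by gcongr; norm_num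

end Bounds

theorem stmt_16 :
    ∃ C : ℝ, 0 < C ∧ ∀ N α γ : ℝ, 2 ≤ N → 0 < α → α ≤ 1/2 →
      |γ| ≤ α / (96 * N^2) →
      ∀ z : ℝ → ℝ,
        (∀ y ∈ Set.Icc (2*α*N + 4*γ*N^3) (2*α*(2*N) + 4*γ*(2*N)^3),
          z y ∈ Set.Icc N (2*N) ∧ 2*α*(z y) + 4*γ*(z y)^3 = y) →
        ∃ v : ℝ → ℝ,
          (∀ y ∈ Set.Icc (2*α*N + 4*γ*N^3) (2*α*(2*N) + 4*γ*(2*N)^3),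
            (α*(z y)^2 + γ*(z y)^4) - y * z y
              = -y^2/(4*α) + γ*y^4/(16*α^4) - γ^2*y^6/(16*α^7) + v y) ∧
          (∀ y ∈ Set.Icc (2*α*N + 4*γ*N^3) (2*α*(2*N) + 4*γ*(2*N)^3),
            |v y| ≤ C * |γ|^3 * N^8 / α^2) ∧
          (∀ y ∈ Set.Icc (2*α*N + 4*γ*N^3) (2*α*(2*N) + 4*γ*(2*N)^3),
            |deriv v y| ≤ C * |γ|^3 * N^7 / α^3) := by

  refine ⟨25259, by norm_num, fun N α γ hN hα _ hγ z hz => ?_⟩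
  have hN_pos : 0 < N := by linarith
  obtain ⟨e, he⟩ := exists_orderIso_eqOn_Icc (by positivity : (0:ℝ) ≤ 5/2 * N) hα
    (by unfold quarticDeriv; fun_prop) (monotoneOn_quarticDeriv_sub_mul hα hN_pos hγ)
  have hz_mem (y) (hy : y ∈ Icc (2*α*N + 4*γ*N^3) (2*α*(2*N) + 4*γ*(2*N)^3)) :
      z y ∈ Ioo 0 (5/2 * N) :=
    ⟨by linarith [(hz y hy).1.1], by linarith [(hz y hy).1.2]⟩
  have he_z (y) (hy : y ∈ Icc (2*α*N + 4*γ*N^3) (2*α*(2*N) + 4*γ*(2*N)^3)) : e (z y) = y :=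
    (he (Ioo_subset_Icc_self (hz_mem y hy))).trans (hz y hy).2
  have he_symm (y) (hy : y ∈ Icc (2*α*N + 4*γ*N^3) (2*α*(2*N) + 4*γ*(2*N)^3)) :
      e.symm y = z y :=
    e.symm_apply_eq.2 (he_z y hy).symm
  have hz_abs (y) (hy : y ∈ Icc (2*α*N + 4*γ*N^3) (2*α*(2*N) + 4*γ*(2*N)^3)) : |z y| ≤ 2 * N :=
    abs_le.2 ⟨by linarith [(hz y hy).1.1], (hz y hy).1.2⟩
  refine ⟨legendreRemainder α γ ∘ e.symm, fun y hy => ?_, fun y hy => ?_, fun y hy => ?_⟩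
  · rw [Function.comp_apply, he_symm y hy]
    exact quartic_sub_mul_eq hα.ne' (hz y hy).2
  · rw [Function.comp_apply, he_symm y hy]
    exact (abs_legendreRemainder_le hα hN_pos hγ (hz_abs y hy)).trans (by gcongr; norm_num)
  · have he_near : e =ᶠ[𝓝 (z y)] quarticDeriv α γ :=
      eventuallyEq_of_mem (Icc_mem_nhds (hz_mem y hy).1 (hz_mem y hy).2) he
    have hD_ne : 2*α + 12*γ*(z y)^2 ≠ 0 := by
      linarith [le_quarticDeriv_deriv hα hN_pos hγ (hz_abs y hy)]
    have h_symm := he_z y hy ▸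
      e.hasDerivAt_symm_of_eventuallyEq he_near (hasDerivAt_quarticDeriv α γ (z y)) hD_ne
    have h_comp := HasDerivAt.comp y (he_symm y hy ▸ hasDerivAt_legendreRemainder α γ (z y)) h_symm
    rw [h_comp.deriv, he_symm y hy]
    exact abs_legendreRemainder_deriv_div_le hα hN_pos hγ (hz_abs y hy)
end

section
/- Let α be real, H ≥ 1 an integer, and δ > 0. Define B_{H,δ}(α) = #{h ∈ {1,…,H} : ‖αh‖ ≤ δ}, where ‖x‖ is the distance from x to the nearest integer. Suppose α = a/q + θ with q ≥ 1, gcd(a,q) = 1, and |θ| ≤ q^{−2}. Then B_{H,δ}(α) ≤ 4(1 + qδ)(1 + H/q). -/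
theorem stmt_18 (α : ℝ) (H : ℕ) (hH : 1 ≤ H) (δ : ℝ) (hδ : 0 < δ)
    (a : ℤ) (q : ℕ) (hq : 1 ≤ q) (θ : ℝ)
    (hcop : Int.gcd a q = 1) (hα : α = a / q + θ) (hθ : |θ| ≤ (q:ℝ)^(-2:ℤ)) :
    (((Finset.Icc 1 H).filter (fun h : ℕ => |α * h - round (α * h)| ≤ δ)).card : ℝ)
      ≤ 4 * (1 + q * δ) * (1 + H / q) := by
  have hq0 : (0:ℝ) < q := by exact_mod_cast hq
  have hq2 : (0:ℝ) < (q:ℝ)^2 := by positivity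
  have hθ2 : |θ| ≤ ((q:ℝ)^2)⁻¹ := by
    have he : ((q:ℝ))^(-2:ℤ) = ((q:ℝ)^2)⁻¹ := by
      rw [zpow_neg]
      norm_cast
    rwa [he] at hθ
  have hθq2 : |θ| * (q:ℝ)^2 ≤ 1 := by
    rw [← inv_mul_cancel₀ hq2.ne']
    exact mul_le_mul_of_nonneg_right hθ2 hq2.le
  set T := (Finset.Icc 1 H).filter (fun h : ℕ => |α * h - round (α * h)| ≤ δ) with hT
  set J := (H - 1) / q + 1 with hJ
  have hfib : ∀ h ∈ T, (h - 1) / q ∈ Finset.range J := by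
    intro h hh
    simp only [Finset.mem_range, hJ]
    have hhH : h ≤ H := (Finset.mem_Icc.mp (Finset.mem_filter.mp hh).1).2
    exact Nat.lt_succ_of_le (Nat.div_le_div_right (Nat.sub_le_sub_right hhH 1))
  have hcard := Finset.card_eq_sum_card_fiberwise hfib
  -- per-fiber bound
  have key : ∀ j : ℕ, ((T.filter (fun h => (h-1)/q = j)).card : ℝ) ≤ 2*q*δ + 3 := by
    intro j
    set c : ℝ := -((q:ℝ)^2 * θ * j) with hc
    set r : ℝ := q*δ + 1 with hr
    have hbounds : ∀ h ∈ T.filter (fun h => (h-1)/q = j),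
        q*j + 1 ≤ h ∧ h ≤ q*j + q := by
      intro h hh
      obtain ⟨hhT, hhj⟩ := Finset.mem_filter.mp hh
      obtain ⟨hh1, _⟩ := Finset.mem_filter.mp hhT
      obtain ⟨hhge, hhle⟩ := Finset.mem_Icc.mp hh1
      have hdm := Nat.div_add_mod (h-1) q
      have hm : (h-1) % q < q := Nat.mod_lt _ hq
      have hhj' : (h-1)/q = j := hhj
      rw [hhj'] at hdm
      omega
    have hmem : ∀ h ∈ T.filter (fun h => (h-1)/q = j),
        (a * (h:ℤ) - (q:ℤ) * round (α * (h:ℝ))) ∈ Finset.Icc ⌈c - r⌉ ⌊c + r⌋ := by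
      intro h hh
      obtain ⟨hl, hu⟩ := hbounds h hh
      obtain ⟨hhT, _⟩ := Finset.mem_filter.mp hh
      have hcond : |α * h - round (α * h)| ≤ δ := (Finset.mem_filter.mp hhT).2
      have hlr : ((q*j + 1 : ℕ):ℝ) ≤ h := Nat.cast_le.mpr hl
      have hur : (h:ℝ) ≤ ((q*j + q : ℕ):ℝ) := Nat.cast_le.mpr hu
      push_cast at hlr hur
      set n : ℤ := round (α * (h:ℝ)) with hn
      have hα' : (q:ℝ) * (α * h) = (a:ℝ) * h + q * (θ * h) := by
        rw [hα]; field_simp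
      have heq : ((a * (h:ℤ) - (q:ℤ) * n : ℤ) : ℝ) - c
          = q * (α * h - n) - q * θ * ((h:ℝ) - q*j) := by
        push_cast
        rw [hc]
        linarith [hα']
      have habs1 : |(q:ℝ) * (α * h - n)| ≤ q * δ := by
        rw [abs_mul, abs_of_nonneg hq0.le]
        exact mul_le_mul_of_nonneg_left hcond hq0.le
      have habs2 : |(q:ℝ) * θ * ((h:ℝ) - q*j)| ≤ 1 := by
        rw [abs_mul, abs_mul, abs_of_nonneg hq0.le,
          abs_of_nonneg (by linarith : (0:ℝ) ≤ (h:ℝ) - q*j)]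
        nlinarith [abs_nonneg θ]
      have hest : |((a * (h:ℤ) - (q:ℤ) * n : ℤ) : ℝ) - c| ≤ r := by
        rw [heq, hr]
        calc |(q:ℝ) * (α * h - n) - q * θ * ((h:ℝ) - q*j)|
            ≤ |(q:ℝ) * (α * h - n)| + |(q:ℝ) * θ * ((h:ℝ) - q*j)| := abs_sub _ _
          _ ≤ q * δ + 1 := add_le_add habs1 habs2
      rw [abs_le] at hest
      rw [Finset.mem_Icc]
      constructor
      · rw [Int.ceil_le]; push_cast; linarith [hest.1]
      · rw [Int.le_floor]; push_cast; linarith [hest.2]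
    have hinj : Set.InjOn (fun h : ℕ => a * (h:ℤ) - (q:ℤ) * round (α * (h:ℝ)))
        ↑(T.filter (fun h => (h-1)/q = j)) := by
      intro h1 hm1 h2 hm2 hfeq
      simp only at hfeq
      obtain ⟨hl1, hu1⟩ := hbounds h1 hm1
      obtain ⟨hl2, hu2⟩ := hbounds h2 hm2
      have hdvd : (q:ℤ) ∣ a * ((h1:ℤ) - h2) :=
        ⟨round (α * (h1:ℝ)) - round (α * (h2:ℝ)), by linarith [hfeq]⟩
      have hco : IsCoprime ((q:ℤ)) a :=
        (Int.isCoprime_iff_gcd_eq_one.mpr hcop).symm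
      have hd2 : (q:ℤ) ∣ ((h1:ℤ) - h2) := hco.dvd_of_dvd_mul_left hdvd
      obtain ⟨k, hk⟩ := hd2
      have c1 : ((q*j + 1 : ℕ):ℤ) ≤ h1 := Int.ofNat_le.mpr hl1
      have c2 : ((h1:ℤ)) ≤ ((q*j + q : ℕ):ℤ) := Int.ofNat_le.mpr hu1
      have c3 : ((q*j + 1 : ℕ):ℤ) ≤ h2 := Int.ofNat_le.mpr hl2
      have c4 : ((h2:ℤ)) ≤ ((q*j + q : ℕ):ℤ) := Int.ofNat_le.mpr hu2
      push_cast at c1 c2 c3 c4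
      have hb1 : -(q:ℤ) < (q:ℤ) * k := by rw [← hk]; linarith
      have hb2 : (q:ℤ) * k < q := by rw [← hk]; linarith
      have hqz : (0:ℤ) < q := by exact_mod_cast hq
      have hk0 : k = 0 := by
        rcases lt_trichotomy k 0 with hlt | he | hgt
        · exfalso
          have : (q:ℤ) * k ≤ q * (-1) := by
            apply mul_le_mul_of_nonneg_left (by omega) hqz.le
          linarith
        · exact he
        · exfalso
          have : (q:ℤ) * 1 ≤ q * k := by
            apply mul_le_mul_of_nonneg_left (by omega) hqz.le
          linarith
      have : (h1:ℤ) = h2 := by rw [hk0, mul_zero] at hk; linarith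
      exact_mod_cast this
    have hc1 : (T.filter (fun h => (h-1)/q = j)).card ≤ (Finset.Icc ⌈c - r⌉ ⌊c + r⌋).card :=
      Finset.card_le_card_of_injOn _ hmem hinj
    have hc2 : ((Finset.Icc ⌈c - r⌉ ⌊c + r⌋).card : ℝ) ≤ 2*q*δ + 3 := by
      rw [Int.card_Icc]
      have hfl : ((⌊c + r⌋ : ℤ) : ℝ) ≤ c + r := Int.floor_le _
      have hce : c - r ≤ ((⌈c - r⌉ : ℤ) : ℝ) := Int.le_ceil _
      rcases le_or_gt (⌊c + r⌋ + 1 - ⌈c - r⌉) 0 with hle | hpos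
      · rw [Int.toNat_of_nonpos hle]
        push_cast
        positivity
      · have hcast : (((⌊c + r⌋ + 1 - ⌈c - r⌉).toNat : ℕ) : ℝ)
            = (((⌊c + r⌋ + 1 - ⌈c - r⌉ : ℤ)) : ℝ) := by
          rw [← Int.cast_natCast, Int.toNat_of_nonneg hpos.le]
        rw [hcast]
        push_cast
        rw [hr] at hfl hce
        linarith
    calc ((T.filter (fun h => (h-1)/q = j)).card : ℝ)
        ≤ ((Finset.Icc ⌈c - r⌉ ⌊c + r⌋).card : ℝ) := Nat.cast_le.mpr hc1
      _ ≤ 2*q*δ + 3 := hc2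
  -- assemble
  have hsum : (T.card : ℝ) ≤ J * (2*q*δ + 3) := by
    rw [hcard, Nat.cast_sum]
    calc (∑ j ∈ Finset.range J, ((T.filter (fun h => (h-1)/q = j)).card : ℝ))
        ≤ ∑ j ∈ Finset.range J, (2*q*δ + 3) := Finset.sum_le_sum (fun j _ => key j)
      _ = J * (2*q*δ + 3) := by
          rw [Finset.sum_const, Finset.card_range, nsmul_eq_mul]
  have hJle : (J:ℝ) ≤ 1 + H/q := by
    have h1 : (((H-1)/q : ℕ) : ℝ) ≤ ((H-1 : ℕ):ℝ) / q := Nat.cast_div_le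
    have h2 : ((H-1 : ℕ):ℝ) / q ≤ (H:ℝ) / q := by
      gcongr
      exact_mod_cast Nat.sub_le H 1
    rw [hJ]
    push_cast
    linarith
  have h4 : 2*q*δ + 3 ≤ 4*(1+q*δ) := by nlinarith [mul_pos hq0 hδ]
  have ht0 : (0:ℝ) ≤ 1 + (H:ℝ)/q := by positivity
  calc (T.card : ℝ) ≤ J * (2*q*δ+3) := hsum
    _ ≤ (1 + H/q) * (4*(1+q*δ)) :=
        mul_le_mul hJle h4 (by positivity) ht0
    _ = 4*(1+q*δ)*(1+H/q) := by ring
end
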